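/- Let H be an infinite-dimensional real Hilbert space, let C ⊂ H be a symmetric convex body, let 𝐞 = {e_γ}_{γ∈Γ} be a complete orthonormal system of H and let k be a positive integer. Then (Q^k(𝐞, C))° = R^k(𝐞, C°), where Q^k(𝐞, C) = ⋂_{S ∈ [Γ]_k} P_{Γ∖S}⁻¹(P_{Γ∖S}(C)) and R^k(𝐞, C) is the closed convex hull of C ∩ ⋃_{S ∈ [Γ]_k} F(Γ∖S). -/

import Mathlib

open Set RealInnerProductSpace

/-- Orthogonal projection of a Hilbert space `H` onto the closed span of `T ⊆ H`,
viewed as a map `H → H`. -/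
noncomputable def projCl {H : Type*} [NormedAddCommGroup H] [InnerProductSpace ℝ H]
    [CompleteSpace H] (T : Set H) : H →L[ℝ] H :=
  haveI : CompleteSpace ((Submodule.span ℝ T).topologicalClosure) :=
    (Submodule.isClosed_topologicalClosure _).completeSpace_coe
  ((Submodule.span ℝ T).topologicalClosure).subtypeL.comp
    (Submodule.orthogonalProjectionOnto ((Submodule.span ℝ T).topologicalClosure))

/-- `E ⊆ H` is a complete orthonormal system: its elements are pairwise orthogonal unit
vectors and its span is dense in `H`. -/
def IsCompleteONS {H : Type*} [NormedAddCommGroup H] [InnerProductSpace ℝ H]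
    (E : Set H) : Prop :=
  Orthonormal ℝ ((↑) : E → H) ∧ (Submodule.span ℝ E).topologicalClosure = ⊤

/-- `Q^k(E, C) = ⋂_{S ∈ [E]_k} P_{E∖S}⁻¹(P_{E∖S}(C))`. -/
noncomputable def kCoConvexHullH {H : Type*} [NormedAddCommGroup H] [InnerProductSpace ℝ H]
    [CompleteSpace H] (E : Set H) (k : ℕ) (C : Set H) : Set H :=
  ⋂ S ∈ {S : Set H | S ⊆ E ∧ S.Finite ∧ S.ncard = k},
    projCl (E \ S) ⁻¹' (projCl (E \ S) '' C)

/-- `R^k(E, C)`: the closed convex hull of `C ∩ ⋃_{S ∈ [E]_k} F(E ∖ S)`. -/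
noncomputable def kCoCrossH {H : Type*} [NormedAddCommGroup H] [InnerProductSpace ℝ H]
    (E : Set H) (k : ℕ) (C : Set H) : Set H :=
  closure (convexHull ℝ (C ∩ ⋃ S ∈ {S : Set H | S ⊆ E ∧ S.Finite ∧ S.ncard = k},
    ((Submodule.span ℝ (E \ S)).topologicalClosure : Set H)))

/-- The polar of a set `A ⊆ H`. -/
def polarSetH {H : Type*} [NormedAddCommGroup H] [InnerProductSpace ℝ H] (A : Set H) :
    Set H :=
  {x | ∀ y ∈ A, ⟪x, y⟫ ≤ 1}


/-!
The inclusion `R^k(𝐞, C°) ⊆ (Q^k(𝐞, C))°` is formal: a point `y` of `C° ∩ F(Γ ∖ S)` is fixed by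
the self-adjoint projection `P = P_{Γ ∖ S}`, so for `x ∈ Q^k` with `P x = P c`, `c ∈ C`, we get
`⟪y, x⟫ = ⟪y, P x⟫ = ⟪y, P c⟫ = ⟪y, c⟫ ≤ 1`.

For the converse we separate a point `x ∉ R^k(𝐞, C°)` from the closed convex set `R^k(𝐞, C°)`
by some `w` in its polar, and show `w ∈ Q^k`. This is a bipolar argument inside each `F(Γ ∖ S)`:
`P w ∈ P(C)`, since otherwise separating `P w` from `P(C)` by some `u` makes `P u` a point of
`C° ∩ F(Γ ∖ S)` with `⟪P u, w⟫ > 1`. The separation needs `P(C)` to be closed, which holds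
because `C` is closed, bounded and convex: minimal-norm points of the decreasing closed convex
sets `C ∩ P⁻¹(B(y, 1/(n+1)))` form a Cauchy sequence, since the variational inequality for
the minimal-norm point `x_n` gives `‖x_n - x_m‖² ≤ ‖x_m‖² - ‖x_n‖²` for `n ≤ m`.
-/

open Filter

theorem Convex.zero_mem_of_neg_eq {V : Type*} [AddCommGroup V] [Module ℝ V] {C : Set V}
    (hconv : Convex ℝ C) (hne : C.Nonempty) (hsym : C = -C) : (0 : V) ∈ C := by
  obtain ⟨z, hz⟩ := hne
  have hz' : -z ∈ C := by rw [hsym]; simpa using hz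
  simpa using hconv hz hz' (by norm_num : (0 : ℝ) ≤ 1 / 2) (by norm_num : (0 : ℝ) ≤ 1 / 2)
    (by norm_num)

theorem Set.infinite_of_topologicalClosure_span_eq_top {V : Type*} [NormedAddCommGroup V]
    [NormedSpace ℝ V] (hinf : ¬ FiniteDimensional ℝ V) {E : Set V}
    (hE : (Submodule.span ℝ E).topologicalClosure = ⊤) : E.Infinite := by
  intro hfin
  have := FiniteDimensional.span_of_finite ℝ hfin
  have hspan : Submodule.span ℝ E = ⊤ := by
    rwa [(Submodule.closed_of_finiteDimensional _).submodule_topologicalClosure_eq] at hE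
  exact hinf ⟨⟨hfin.toFinset, by simpa using hspan⟩⟩

section Hilbert

variable {H : Type*} [NormedAddCommGroup H] [InnerProductSpace ℝ H]

theorem polarSetH_eq_iInter (A : Set H) : polarSetH A = ⋂ y ∈ A, {x | ⟪x, y⟫ ≤ 1} := by
  ext x; simp [polarSetH]

theorem isClosed_polarSetH (A : Set H) : IsClosed (polarSetH A) := by
  rw [polarSetH_eq_iInter]
  exact isClosed_biInter fun y _ => isClosed_le (continuous_id.inner continuous_const)
    continuous_const

theorem convex_polarSetH (A : Set H) : Convex ℝ (polarSetH A) := by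
  rw [polarSetH_eq_iInter]
  exact convex_iInter₂ fun y _ => convex_halfSpace_le ((innerₗ H).flip y).isLinear 1

theorem zero_mem_polarSetH (A : Set H) : (0 : H) ∈ polarSetH A := by
  intro y _; simp

variable [CompleteSpace H]

theorem exists_mem_polarSetH_one_lt_inner {B : Set H} (hconv : Convex ℝ B) (hcl : IsClosed B)
    (h0 : (0 : H) ∈ B) {x : H} (hx : x ∉ B) : ∃ w ∈ polarSetH B, 1 < ⟪w, x⟫ := by
  obtain ⟨f, u, hf, hfx⟩ := geometric_hahn_banach_closed_point hconv hcl hx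
  have hu : 0 < u := by simpa using hf 0 h0
  set v := (InnerProductSpace.toDual ℝ H).symm f
  have hv : ∀ z, ⟪v, z⟫ = f z := fun z => InnerProductSpace.toDual_symm_apply
  refine ⟨u⁻¹ • v, fun b hb => ?_, ?_⟩
  · rw [real_inner_smul_left, hv, inv_mul_le_one₀ hu]
    exact (hf b hb).le
  · rw [real_inner_smul_left, hv, one_lt_inv_mul₀ hu]
    exact hfx

theorem nonempty_iInter_of_antitone_of_convex {s : ℕ → Set H} (hcl : ∀ n, IsClosed (s n))
    (hconv : ∀ n, Convex ℝ (s n)) (hne : ∀ n, (s n).Nonempty) (hanti : Antitone s)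
    (hbdd : Bornology.IsBounded (s 0)) : (⋂ n, s n).Nonempty := by
  have hmin : ∀ n, ∃ x ∈ s n, ∀ w ∈ s n, 0 ≤ ⟪x, w - x⟫ := fun n => by
    obtain ⟨x, hx, hxmin⟩ :=
      exists_norm_eq_iInf_of_complete_convex (hne n) (hcl n).isComplete (hconv n) 0
    refine ⟨x, hx, fun w hw => ?_⟩
    have := (norm_eq_iInf_iff_real_inner_le_zero (hconv n) hx).1 hxmin w hw
    rw [zero_sub, inner_neg_left] at this
    linarith
  choose x hx hxmin using hmin
  have hdist : ∀ n m, n ≤ m → ‖x n - x m‖ ^ 2 ≤ ‖x m‖ ^ 2 - ‖x n‖ ^ 2 := by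
    intro n m hnm
    have h := hxmin n (x m) (hanti hnm (hx m))
    rw [inner_sub_right, real_inner_self_eq_norm_sq] at h
    rw [norm_sub_sq_real]
    linarith [real_inner_comm (x n) (x m)]
  set a : ℕ → ℝ := fun n => ‖x n‖ ^ 2
  have ha_mono : Monotone a := fun n m hnm => by
    linarith [hdist n m hnm, sq_nonneg ‖x n - x m‖]
  have ha_bdd : BddAbove (range a) := by
    obtain ⟨R, hR⟩ := isBounded_iff_forall_norm_le.mp hbdd
    exact ⟨R ^ 2, forall_mem_range.2 fun n =>
      pow_le_pow_left₀ (norm_nonneg _) (hR _ (hanti (Nat.zero_le n) (hx n))) 2⟩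
  have hcauchy : CauchySeq x := by
    refine cauchySeq_of_le_tendsto_0' (fun n => √((⨆ m, a m) - a n)) (fun n m hnm => ?_) ?_
    · rw [dist_eq_norm, ← Real.sqrt_sq (norm_nonneg _)]
      exact Real.sqrt_le_sqrt ((hdist n m hnm).trans (by linarith [le_ciSup ha_bdd m]))
    · simpa using
        ((tendsto_const_nhds (x := ⨆ m, a m)).sub (tendsto_atTop_ciSup ha_mono ha_bdd)).sqrt
  obtain ⟨l, hl⟩ := cauchySeq_tendsto_of_complete hcauchy
  refine ⟨l, mem_iInter.2 fun n => (hcl n).mem_of_tendsto hl ?_⟩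
  filter_upwards [eventually_ge_atTop n] with m hm using hanti hm (hx m)

theorem ContinuousLinearMap.isClosed_image_of_convex_of_isBounded {F : Type*}
    [NormedAddCommGroup F] [NormedSpace ℝ F] (P : H →L[ℝ] F) {C : Set H} (hcl : IsClosed C)
    (hconv : Convex ℝ C) (hbdd : Bornology.IsBounded C) : IsClosed (P '' C) := by
  refine isClosed_of_closure_subset fun y hy => ?_
  set s : ℕ → Set H := fun n => C ∩ P ⁻¹' Metric.closedBall y (1 / ((n : ℝ) + 1))
  have hne : ∀ n, (s n).Nonempty := fun n => by
    obtain ⟨_, ⟨c, hc, rfl⟩, hdist⟩ := Metric.mem_closure_iff.mp hy _ Nat.one_div_pos_of_nat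
    exact ⟨c, hc, by simpa [dist_comm] using hdist.le⟩
  have hanti : Antitone s := fun n m hnm =>
    inter_subset_inter_right _ <| preimage_mono <| Metric.closedBall_subset_closedBall <|
      Nat.one_div_le_one_div hnm
  obtain ⟨z, hz⟩ := nonempty_iInter_of_antitone_of_convex
    (fun n => hcl.inter (Metric.isClosed_closedBall.preimage P.continuous))
    (fun n => hconv.inter ((convex_closedBall y _).linear_preimage (P : H →ₗ[ℝ] F)))
    hne hanti (hbdd.subset inter_subset_left)
  have hdist : ∀ n : ℕ, dist (P z) y ≤ 1 / ((n : ℝ) + 1) := fun n => (mem_iInter.mp hz n).2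
  exact ⟨z, (mem_iInter.mp hz 0).1,
    dist_le_zero.mp (ge_of_tendsto' tendsto_one_div_add_atTop_nhds_zero_nat hdist)⟩

theorem Submodule.starProjection_mem_image_of_polarSetH (K : Submodule ℝ H)
    [K.HasOrthogonalProjection] {C : Set H} (hcl : IsClosed C) (hconv : Convex ℝ C)
    (hbdd : Bornology.IsBounded C) (h0 : (0 : H) ∈ C) {w : H}
    (hw : ∀ d ∈ polarSetH C, d ∈ K → ⟪d, w⟫ ≤ 1) :
    K.starProjection w ∈ K.starProjection '' C := by
  by_contra hPw
  obtain ⟨u, hu, hPwu⟩ := exists_mem_polarSetH_one_lt_inner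
    (by simpa using hconv.linear_image (K.starProjection : H →ₗ[ℝ] H))
    (K.starProjection.isClosed_image_of_convex_of_isBounded hcl hconv hbdd)
    ⟨0, h0, map_zero _⟩ hPw
  have hPu : K.starProjection u ∈ polarSetH C := fun c hc => by
    rw [K.inner_starProjection_left_eq_right]
    exact hu _ ⟨c, hc, rfl⟩
  have := hw _ hPu (K.starProjection_apply_mem u)
  rw [K.inner_starProjection_left_eq_right] at this
  linarith

end Hilbert

section CoConvexHull

variable {H : Type*} [NormedAddCommGroup H] [InnerProductSpace ℝ H] [CompleteSpace H]

theorem projCl_eq_starProjection (T : Set H) :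
    projCl T = (Submodule.span ℝ T).topologicalClosure.starProjection :=
  rfl

theorem kCoCrossH_polarSetH_subset (E : Set H) (k : ℕ) (C : Set H) :
    kCoCrossH E k (polarSetH C) ⊆ polarSetH (kCoConvexHullH E k C) := by
  refine closure_minimal (convexHull_min ?_ (convex_polarSetH _)) (isClosed_polarSetH _)
  rintro y ⟨hyC, hyF⟩ x hx
  obtain ⟨S, hS, hyF⟩ := mem_iUnion₂.mp hyF
  obtain ⟨c, hc, hPc⟩ := mem_iInter₂.mp hx S hS
  set K := (Submodule.span ℝ (E \ S)).topologicalClosure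
  have hPy : K.starProjection y = y := K.starProjection_eq_self_iff.mpr hyF
  rw [projCl_eq_starProjection] at hPc
  calc ⟪y, x⟫ = ⟪y, K.starProjection c⟫ := by
        rw [hPc, ← K.inner_starProjection_left_eq_right, hPy]
    _ = ⟪y, c⟫ := by rw [← K.inner_starProjection_left_eq_right, hPy]
    _ ≤ 1 := hyC c hc

theorem polarSetH_kCoConvexHullH_subset {E : Set H} (hE : E.Infinite) (k : ℕ) {C : Set H}
    (hcl : IsClosed C) (hconv : Convex ℝ C) (hbdd : Bornology.IsBounded C)
    (h0 : (0 : H) ∈ C) : polarSetH (kCoConvexHullH E k C) ⊆ kCoCrossH E k (polarSetH C) := by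
  intro x hx
  by_contra hxR
  obtain ⟨S₀, hS₀⟩ := hE.exists_subset_ncard_eq k
  have h0R : (0 : H) ∈ kCoCrossH E k (polarSetH C) :=
    subset_closure <| subset_convexHull ℝ _
      ⟨zero_mem_polarSetH C, mem_biUnion hS₀ (Submodule.zero_mem _)⟩
  obtain ⟨w, hw, hwx⟩ := exists_mem_polarSetH_one_lt_inner (convex_convexHull ℝ _).closure
    isClosed_closure h0R hxR
  have hwQ : w ∈ kCoConvexHullH E k C := mem_iInter₂.mpr fun S hS =>
    Submodule.starProjection_mem_image_of_polarSetH _ hcl hconv hbdd h0 fun d hdC hdF =>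
      real_inner_comm w d ▸
        hw d (subset_closure (subset_convexHull ℝ _ ⟨hdC, mem_biUnion hS hdF⟩))
  linarith [real_inner_comm w x ▸ hx w hwQ]

end CoConvexHull

theorem stmt_13_general {H : Type*} [NormedAddCommGroup H] [InnerProductSpace ℝ H] [CompleteSpace H]
    (hinf : ¬ FiniteDimensional ℝ H)
    (C : Set H) (hCcl : IsClosed C) (hCconv : Convex ℝ C)
    (hCbdd : Bornology.IsBounded C) (hCint : (interior C).Nonempty) (hCsym : C = -C)
    (E : Set H) (hE : IsCompleteONS E) (k : ℕ) :
    polarSetH (kCoConvexHullH E k C) = kCoCrossH E k (polarSetH C) := by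
  have h0C : (0 : H) ∈ C := hCconv.zero_mem_of_neg_eq (hCint.mono interior_subset) hCsym
  have hEinf : E.Infinite := Set.infinite_of_topologicalClosure_span_eq_top hinf hE.2
  exact (polarSetH_kCoConvexHullH_subset hEinf k hCcl hCconv hCbdd h0C).antisymm
    (kCoCrossH_polarSetH_subset E k C)

/-- For a symmetric convex body `C` in an infinite-dimensional Hilbert space `H`, a
complete orthonormal system `E` and a positive integer `k`,
`(Q^k(E, C))° = R^k(E, C°)`. -/
theorem stmt_13 {H : Type*} [NormedAddCommGroup H] [InnerProductSpace ℝ H] [CompleteSpace H]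
    (hinf : ¬ FiniteDimensional ℝ H)
    (C : Set H) (hCcl : IsClosed C) (hCconv : Convex ℝ C)
    (hCbdd : Bornology.IsBounded C) (hCint : (interior C).Nonempty) (hCsym : C = -C)
    (E : Set H) (hE : IsCompleteONS E) (k : ℕ) (hk : 0 < k) :
    polarSetH (kCoConvexHullH E k C) = kCoCrossH E k (polarSetH C) :=
  stmt_13_general hinf C hCcl hCconv hCbdd hCint hCsym E hE k
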